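/- arXiv:1604.01872 — 3 statements merged into one kernel-verified Lean document; each statement's English description precedes it below -/
import Mathlib

section
/- Let A₁,…,Aₘ be linearly independent n×n complex matrices and let Ω_A be the open unit ball of the norm ‖(z₁,…,zₘ)‖_A = ‖z₁A₁+⋯+zₘAₘ‖_op on ℂᵐ. Fix w ∈ Ω_A and p×q complex matrices V₁,…,Vₘ. For a holomorphic function f : Ω_A → ℂ let ρ_V(f) denote the (p+q)×(p+q) block matrix [[f(w)·I_p, Σᵢ₌₁ᵐ (∂ᵢf(w))·Vᵢ],[0, f(w)·I_q]]. Then ‖ρ_V(f)‖_op ≤ 1 for every holomorphic f : Ω_A → ℂ with sup_{z∈Ω_A}|f(z)| ≤ 1 if and only if ‖ρ_V(g)‖_op ≤ 1 for every holomorphic g : Ω_A → ℂ with sup_{z∈Ω_A}|g(z)| ≤ 1 and g(w) = 0. -/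
/-!
If `|f w| < 1`, compose `f` with the disc automorphism `φₐ z = (z - a) / (1 - ā z)`, `a = f w`.
The result `g` vanishes at `w` and `dg(w) = df(w) / (1 - |a|²)`, so `‖ρ_V(g)‖ ≤ 1` bounds the
off-diagonal block `C = Σ ∂ᵢf(w) Vᵢ` of `ρ_V(f)` by `1 - |a|²`. If `|f w| = 1`, the maximum
modulus principle makes `f` locally constant, so `C = 0`. Finally `‖C‖ ≤ 1 - |a|²` is enough
for `[[a, C], [0, a]]` to be a contraction.
-/

open scoped Matrix.Norms.L2Operator Topology
open Matrix WithLp ComplexConjugate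

namespace Matrix

variable {𝕜 : Type*} [RCLike 𝕜] {ι κ ι' κ' : Type*}
  [Fintype ι] [Fintype κ] [Fintype ι'] [Fintype κ']

lemma norm_toLp_sumElim_sq (u : ι → 𝕜) (v : κ → 𝕜) :
    ‖(toLp 2 (Sum.elim u v) : EuclideanSpace 𝕜 (ι ⊕ κ))‖ ^ 2 =
      ‖toLp 2 u‖ ^ 2 + ‖toLp 2 v‖ ^ 2 := by
  simp [EuclideanSpace.norm_sq_eq, Fintype.sum_sum_type]

variable [DecidableEq ι] [DecidableEq κ]

lemma l2_opNorm_le_of_forall_sumElim {M : Matrix (ι' ⊕ κ') (ι ⊕ κ) 𝕜} {c : ℝ} (hc : 0 ≤ c)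
    (h : ∀ u v, ‖toLp 2 (M *ᵥ Sum.elim u v)‖ ≤
      c * ‖(toLp 2 (Sum.elim u v) : EuclideanSpace 𝕜 (ι ⊕ κ))‖) :
    ‖M‖ ≤ c := by
  rw [l2_opNorm_def]
  refine ContinuousLinearMap.opNorm_le_bound _ hc fun x => ?_
  have hx : x = toLp 2 (Sum.elim (ofLp x ∘ Sum.inl) (ofLp x ∘ Sum.inr)) := by
    ext (i | j) <;> rfl
  rw [hx]
  exact h _ _

lemma l2_opNorm_le_fromBlocks₁₂ (A : Matrix ι' ι 𝕜) (B : Matrix ι' κ 𝕜) (C : Matrix κ' ι 𝕜)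
    (D : Matrix κ' κ 𝕜) : ‖B‖ ≤ ‖fromBlocks A B C D‖ := by
  rw [l2_opNorm_def]
  refine ContinuousLinearMap.opNorm_le_bound _ (norm_nonneg _) fun v => ?_
  have hBD : ‖toLp 2 (B *ᵥ ofLp v)‖ ≤
      ‖(toLp 2 (Sum.elim (B *ᵥ ofLp v) (D *ᵥ ofLp v)) : EuclideanSpace 𝕜 (ι' ⊕ κ'))‖ := by
    rw [← pow_le_pow_iff_left₀ (norm_nonneg _) (norm_nonneg _) two_ne_zero,
      norm_toLp_sumElim_sq]
    exact le_add_of_nonneg_right (sq_nonneg _)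
  have h0v : ‖(toLp 2 (Sum.elim 0 (ofLp v)) : EuclideanSpace 𝕜 (ι ⊕ κ))‖ = ‖v‖ := by
    rw [← sq_eq_sq₀ (norm_nonneg _) (norm_nonneg _), norm_toLp_sumElim_sq]
    simp
  calc ‖toEuclideanLin B v‖ = ‖toLp 2 (B *ᵥ ofLp v)‖ := rfl
    _ ≤ ‖toLp 2 (fromBlocks A B C D *ᵥ Sum.elim 0 (ofLp v))‖ := by
      simpa only [fromBlocks_mulVec, Sum.elim_comp_inl, Sum.elim_comp_inr, mulVec_zero,
        zero_add] using hBD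
    _ ≤ ‖fromBlocks A B C D‖ * ‖v‖ :=
      h0v ▸ l2_opNorm_mulVec _ (toLp 2 (Sum.elim 0 (ofLp v)))

lemma l2_opNorm_fromBlocks_smul_one_le_one {a : 𝕜} {C : Matrix ι κ 𝕜}
    (hC : ‖C‖ ≤ 1 - ‖a‖ ^ 2) :
    ‖fromBlocks (a • 1 : Matrix ι ι 𝕜) C 0 (a • (1 : Matrix κ κ 𝕜))‖ ≤ 1 := by
  refine l2_opNorm_le_of_forall_sumElim zero_le_one fun u v => ?_
  rw [one_mul, fromBlocks_mulVec,
    ← pow_le_pow_iff_left₀ (norm_nonneg _) (norm_nonneg _) two_ne_zero,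
    norm_toLp_sumElim_sq, norm_toLp_sumElim_sq]
  simp only [Sum.elim_comp_inl, Sum.elim_comp_inr, smul_mulVec, one_mulVec, zero_mulVec,
    zero_add, toLp_add, toLp_smul, norm_smul]
  have hs : ‖a‖ ^ 2 ≤ 1 := by linarith [norm_nonneg C]
  have hupper : ‖a • toLp 2 u + toLp 2 (C *ᵥ v)‖ ≤ ‖a‖ * ‖toLp 2 u‖ + (1 - ‖a‖ ^ 2) * ‖toLp 2 v‖ :=
    calc _ ≤ ‖a‖ * ‖toLp 2 u‖ + ‖C‖ * ‖toLp 2 v‖ :=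
          (norm_add_le _ _).trans (add_le_add (norm_smul _ _).le (l2_opNorm_mulVec C (toLp 2 v)))
      _ ≤ _ := by gcongr
  -- `‖u‖² + ‖v‖² - (|a|‖u‖ + (1 - |a|²)‖v‖)² - |a|²‖v‖² = (1 - |a|²)(‖u‖ - |a|‖v‖)²`
  nlinarith [pow_le_pow_left₀ (norm_nonneg _) hupper 2,
    mul_nonneg (sub_nonneg.2 hs) (sq_nonneg (‖toLp 2 u‖ - ‖a‖ * ‖toLp 2 v‖))]

end Matrix

noncomputable def mobius (a z : ℂ) : ℂ := (z - a) / (1 - conj a * z)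

lemma normSq_one_sub_conj_mul_sub_normSq_sub (a z : ℂ) :
    Complex.normSq (1 - conj a * z) - Complex.normSq (z - a) =
      (1 - Complex.normSq a) * (1 - Complex.normSq z) := by
  simp only [Complex.normSq_apply, Complex.sub_re, Complex.sub_im, Complex.mul_re,
    Complex.mul_im, Complex.one_re, Complex.one_im, Complex.conj_re, Complex.conj_im]
  ring

lemma norm_mobius_le_one {a z : ℂ} (ha : ‖a‖ ≤ 1) (hz : ‖z‖ ≤ 1) : ‖mobius a z‖ ≤ 1 := by
  have hnum : ‖z - a‖ ≤ ‖1 - conj a * z‖ := by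
    rw [← sq_le_sq₀ (norm_nonneg _) (norm_nonneg _), ← Complex.normSq_eq_norm_sq,
      ← Complex.normSq_eq_norm_sq, ← sub_nonneg, normSq_one_sub_conj_mul_sub_normSq_sub,
      Complex.normSq_eq_norm_sq, Complex.normSq_eq_norm_sq]
    exact mul_nonneg (sub_nonneg.2 (pow_le_one₀ (norm_nonneg a) ha))
      (sub_nonneg.2 (pow_le_one₀ (norm_nonneg z) hz))
  rw [mobius, norm_div]
  exact div_le_one_of_le₀ hnum (norm_nonneg _)

@[simp] lemma mobius_self (a : ℂ) : mobius a a = 0 := by simp [mobius]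

lemma one_sub_conj_mul_ne_zero {a z : ℂ} (ha : ‖a‖ < 1) (hz : ‖z‖ ≤ 1) :
    1 - conj a * z ≠ 0 := by
  refine sub_ne_zero.2 fun h => ?_
  have : ‖conj a * z‖ < 1 := by
    rw [norm_mul, Complex.norm_conj]
    exact mul_lt_one_of_nonneg_of_lt_one_left (norm_nonneg a) ha hz
  simp [← h] at this

lemma hasDerivAt_mobius {a z : ℂ} (h : 1 - conj a * z ≠ 0) :
    HasDerivAt (mobius a) ((1 - conj a * a) / (1 - conj a * z) ^ 2) z :=
  (((hasDerivAt_id z).sub_const a).div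
    (((hasDerivAt_id z).const_mul (conj a)).const_sub 1) h).congr_deriv (by simp only [id]; ring)

lemma hasDerivAt_mobius_self {a : ℂ} (ha : ‖a‖ < 1) :
    HasDerivAt (mobius a) ((1 - ‖a‖ ^ 2 : ℝ) : ℂ)⁻¹ a := by
  convert hasDerivAt_mobius (one_sub_conj_mul_ne_zero ha ha.le) using 1
  rw [Complex.conj_mul']
  push_cast
  field_simp

section Holomorphic

variable {E F : Type*} [NormedAddCommGroup E] [NormedSpace ℂ E] [NormedAddCommGroup F]
  [NormedSpace ℂ F]

lemma DifferentiableOn.mobius_comp {a : ℂ} {f : E → ℂ} {s : Set E} (ha : ‖a‖ < 1)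
    (hf : DifferentiableOn ℂ f s) (hb : ∀ z ∈ s, ‖f z‖ ≤ 1) :
    DifferentiableOn ℂ (mobius a ∘ f) s := fun z hz =>
  (hasDerivAt_mobius (one_sub_conj_mul_ne_zero ha (hb z hz))).differentiableAt
    |>.comp_differentiableWithinAt z (hf z hz)

lemma fderiv_mobius_comp_self {f : E → ℂ} {w : E} (hfw : ‖f w‖ < 1)
    (hf : DifferentiableAt ℂ f w) :
    fderiv ℂ (mobius (f w) ∘ f) w = ((1 - ‖f w‖ ^ 2 : ℝ) : ℂ)⁻¹ • fderiv ℂ f w :=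
  ((hasDerivAt_mobius_self hfw).comp_hasFDerivAt w hf.hasFDerivAt).fderiv

lemma fderiv_eq_zero_of_isLocalMax_norm [StrictConvexSpace ℝ F] {f : E → F} {c : E}
    (hd : ∀ᶠ z in 𝓝 c, DifferentiableAt ℂ f z) (hc : IsLocalMax (norm ∘ f) c) :
    fderiv ℂ f c = 0 := by
  rw [Filter.EventuallyEq.fderiv_eq (Complex.eventually_eq_of_isLocalMax_norm hd hc),
    fderiv_const_apply]

end Holomorphic

theorem contractive_iff_contractive_on_vanishing_general
    (m n p q : ℕ) (A : Fin m → Matrix (Fin n) (Fin n) ℂ)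
    (Ω : Set (Fin m → ℂ)) (hΩ : Ω = {z : Fin m → ℂ | ‖∑ i, z i • A i‖ < 1})
    (w : Fin m → ℂ) (hw : w ∈ Ω)
    (V : Fin m → Matrix (Fin p) (Fin q) ℂ)
    (ρ : ((Fin m → ℂ) → ℂ) → Matrix (Fin p ⊕ Fin q) (Fin p ⊕ Fin q) ℂ)
    (hρ : ∀ f, ρ f = Matrix.fromBlocks
      (f w • (1 : Matrix (Fin p) (Fin p) ℂ))
      (∑ i, fderiv ℂ f w (Pi.single i 1) • V i)
      0
      (f w • (1 : Matrix (Fin q) (Fin q) ℂ))) :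
    (∀ f : (Fin m → ℂ) → ℂ, DifferentiableOn ℂ f Ω → (∀ z ∈ Ω, ‖f z‖ ≤ 1) → ‖ρ f‖ ≤ 1) ↔
    (∀ g : (Fin m → ℂ) → ℂ, DifferentiableOn ℂ g Ω → (∀ z ∈ Ω, ‖g z‖ ≤ 1) → g w = 0 →
      ‖ρ g‖ ≤ 1) := by
  refine ⟨fun h g hg hgb _ => h g hg hgb, fun H f hf hfb => ?_⟩
  have hΩw : Ω ∈ 𝓝 w := (hΩ ▸ isOpen_lt (by fun_prop) continuous_const : IsOpen Ω).mem_nhds hw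
  suffices ‖∑ i, fderiv ℂ f w (Pi.single i 1) • V i‖ ≤ 1 - ‖f w‖ ^ 2 by
    rw [hρ]
    exact l2_opNorm_fromBlocks_smul_one_le_one this
  rcases (hfb w hw).lt_or_eq with hlt | heq
  · have hr : 0 < 1 - ‖f w‖ ^ 2 := sub_pos.2 (pow_lt_one₀ (norm_nonneg _) hlt two_ne_zero)
    have hg := H (mobius (f w) ∘ f) (hf.mobius_comp hlt hfb)
      (fun z hz => norm_mobius_le_one hlt.le (hfb z hz)) (mobius_self _)
    rw [hρ, fderiv_mobius_comp_self hlt (hf.differentiableAt hΩw)] at hg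
    have hC := (l2_opNorm_le_fromBlocks₁₂ _ _ _ _).trans hg
    simp only [_root_.smul_apply, smul_eq_mul, mul_smul, ← Finset.smul_sum, norm_smul,
      norm_inv, Complex.norm_real, Real.norm_of_nonneg hr.le] at hC
    rwa [inv_mul_le_iff₀ hr, mul_one] at hC
  · have hmax : IsLocalMax (norm ∘ f) w :=
      Filter.mem_of_superset hΩw fun z hz => by simpa [heq] using hfb z hz
    rw [fderiv_eq_zero_of_isLocalMax_norm (hf.eventually_differentiableAt hΩw) hmax, heq]
    simp

/-- Contractivity of `ρ_V` on all holomorphic self-maps of the disc is equivalent to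
contractivity on those vanishing at `w`. -/
theorem contractive_iff_contractive_on_vanishing
    (m n p q : ℕ) (A : Fin m → Matrix (Fin n) (Fin n) ℂ)
    (hA : LinearIndependent ℂ A)
    (Ω : Set (Fin m → ℂ)) (hΩ : Ω = {z : Fin m → ℂ | ‖∑ i, z i • A i‖ < 1})
    (w : Fin m → ℂ) (hw : w ∈ Ω)
    (V : Fin m → Matrix (Fin p) (Fin q) ℂ)
    (ρ : ((Fin m → ℂ) → ℂ) → Matrix (Fin p ⊕ Fin q) (Fin p ⊕ Fin q) ℂ)
    (hρ : ∀ f, ρ f = Matrix.fromBlocks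
      (f w • (1 : Matrix (Fin p) (Fin p) ℂ))
      (∑ i, fderiv ℂ f w (Pi.single i 1) • V i)
      0
      (f w • (1 : Matrix (Fin q) (Fin q) ℂ))) :
    (∀ f : (Fin m → ℂ) → ℂ, DifferentiableOn ℂ f Ω → (∀ z ∈ Ω, ‖f z‖ ≤ 1) → ‖ρ f‖ ≤ 1) ↔
    (∀ g : (Fin m → ℂ) → ℂ, DifferentiableOn ℂ g Ω → (∀ z ∈ Ω, ‖g z‖ ≤ 1) → g w = 0 →
      ‖ρ g‖ ≤ 1) :=
  contractive_iff_contractive_on_vanishing_general m n p q A Ω hΩ w hw V ρ hρ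
end

section
/- Let d, c ∈ ℂ and b ≥ 0 real, and set A₁ = [[1,0],[0,d]], A₂ = [[1,b],[c,0]], Z₁ = [[1,0],[0,0]], Z₂ = [[0,1],[0,0]]. If |d| ≠ 1 and b ≠ |c|, then the operator norm of the 4×4 matrix A₁⊗Z₁ + A₂⊗Z₂ is different from the operator norm of A₁ᵗ⊗Z₁ + A₂ᵗ⊗Z₂, where Aᵗ denotes the (non-conjugated) transpose. -/
/-!
Write `M = A₁ ⊗ Z₁ + A₂ ⊗ Z₂`. Since `Z₁Z₁ᴴ = Z₂Z₂ᴴ = E₀₀` and `Z₁Z₂ᴴ = 0`, one has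
`M Mᴴ = (A₁A₁ᴴ + A₂A₂ᴴ) ⊗ E₀₀`. By the C⋆-identity and positivity, `‖M‖² = ‖M Mᴴ‖` lies in the
spectrum of `M Mᴴ`, hence (being nonzero) in that of the `2 × 2` matrix `A₁A₁ᴴ + A₂A₂ᴴ`. For `A`
and `Aᵗ` these two `2 × 2` matrices have the same trace, so a common eigenvalue forces equal
determinants; but the determinants differ by `(|c|² - b²)(1 - |d|²) ≠ 0`.
-/

open Matrix
open scoped Matrix.Norms.L2Operator Kronecker
open scoped MatrixOrder ComplexOrder

theorem Matrix.mem_spectrum_iff_exists_mulVec_eq_smul {K n : Type*} [Field K] [Fintype n]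
    [DecidableEq n] (A : Matrix n n K) (μ : K) :
    μ ∈ spectrum K A ↔ ∃ v ≠ 0, A *ᵥ v = μ • v := by
  rw [spectrum.mem_iff, isUnit_iff_isUnit_det, isUnit_iff_ne_zero, not_not,
    ← exists_mulVec_eq_zero_iff]
  simp only [Algebra.algebraMap_eq_smul_one, sub_mulVec, smul_mulVec, one_mulVec, sub_eq_zero,
    eq_comm]

theorem Matrix.mem_spectrum_fin_two_iff {K : Type*} [Field K] (B : Matrix (Fin 2) (Fin 2) K)
    (μ : K) : μ ∈ spectrum K B ↔ (μ - B 0 0) * (μ - B 1 1) - B 0 1 * B 1 0 = 0 := by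
  rw [spectrum.mem_iff, isUnit_iff_isUnit_det, isUnit_iff_ne_zero, not_not, det_fin_two]
  simp [Algebra.algebraMap_eq_smul_one]

theorem Matrix.det_eq_of_mem_spectrum_of_trace_eq {K : Type*} [Field K]
    {B B' : Matrix (Fin 2) (Fin 2) K} {μ : K} (h : μ ∈ spectrum K B) (h' : μ ∈ spectrum K B')
    (htr : B.trace = B'.trace) : B.det = B'.det := by
  rw [mem_spectrum_fin_two_iff] at h h'
  rw [trace_fin_two, trace_fin_two] at htr
  rw [det_fin_two, det_fin_two]
  linear_combination h - h' + μ * htr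

theorem Matrix.kronecker_single_mulVec_apply {K m n : Type*} [Field K] [Fintype m] [Fintype n]
    [DecidableEq n] (B : Matrix m m K) (k : n) (v : m × n → K) (i : m) (l : n) :
    (B ⊗ₖ single k k 1 *ᵥ v) (i, l) = if l = k then (B *ᵥ fun j => v (j, k)) i else 0 := by
  split_ifs with h
  · subst h
    simp [mulVec, dotProduct, Fintype.sum_prod_type, single_apply]
  · simp [mulVec, dotProduct, Ne.symm h]

theorem Matrix.mem_spectrum_of_mem_spectrum_kronecker_single {K m n : Type*} [Field K]
    [Fintype m] [DecidableEq m] [Fintype n] [DecidableEq n] {B : Matrix m m K} {k : n} {μ : K}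
    (hμ : μ ≠ 0) (h : μ ∈ spectrum K (B ⊗ₖ single k k 1)) : μ ∈ spectrum K B := by
  obtain ⟨v, hv, hBv⟩ := (mem_spectrum_iff_exists_mulVec_eq_smul _ μ).mp h
  have hcomp (i : m) (l : n) :
      (if l = k then (B *ᵥ fun j => v (j, k)) i else 0) = μ * v (i, l) := by
    rw [← kronecker_single_mulVec_apply, hBv, Pi.smul_apply, smul_eq_mul]
  refine (mem_spectrum_iff_exists_mulVec_eq_smul _ μ).mpr ⟨fun j => v (j, k), ?_, ?_⟩
  · intro hw
    apply hv
    ext ⟨i, l⟩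
    by_cases hl : l = k
    · subst hl
      exact congrFun hw i
    · simpa [hl, hμ] using hcomp i l
  · ext i
    simpa using hcomp i k

theorem Matrix.kronecker_add_kronecker_mul_conjTranspose {R l m n p : Type*} [CommRing R]
    [StarRing R] [Fintype m] [Fintype p] (A₁ A₂ : Matrix l m R) {Z₁ Z₂ : Matrix n p R}
    {P : Matrix n n R} (h₁ : Z₁ * Z₁ᴴ = P) (h₂ : Z₂ * Z₂ᴴ = P) (h₁₂ : Z₁ * Z₂ᴴ = 0) :
    (A₁ ⊗ₖ Z₁ + A₂ ⊗ₖ Z₂) * (A₁ ⊗ₖ Z₁ + A₂ ⊗ₖ Z₂)ᴴ = (A₁ * A₁ᴴ + A₂ * A₂ᴴ) ⊗ₖ P := by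
  have h₂₁ : Z₂ * Z₁ᴴ = 0 := by
    rw [← conjTranspose_conjTranspose Z₂, ← conjTranspose_mul, h₁₂, conjTranspose_zero]
  rw [conjTranspose_add, conjTranspose_kronecker, conjTranspose_kronecker, Matrix.add_mul,
    Matrix.mul_add, Matrix.mul_add, ← mul_kronecker_mul, ← mul_kronecker_mul,
    ← mul_kronecker_mul, ← mul_kronecker_mul, h₁, h₂, h₁₂, h₂₁, kronecker_zero, kronecker_zero,
    add_zero, zero_add, add_kronecker]

theorem Matrix.sq_l2_opNorm_mem_spectrum_mul_conjTranspose {n : Type*} [Fintype n]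
    [DecidableEq n] [Nonempty n] (M : Matrix n n ℂ) :
    ((‖M‖ ^ 2 : ℝ) : ℂ) ∈ spectrum ℂ (M * Mᴴ) := by
  have hpos : 0 ≤ M * Mᴴ := nonneg_iff_posSemidef.mpr (posSemidef_self_mul_conjTranspose M)
  have h := CStarAlgebra.norm_mem_spectrum_of_nonneg hpos
  rw [← star_eq_conjTranspose, CStarRing.norm_self_mul_star, ← sq] at h
  exact spectrum.algebraMap_mem ℂ h

theorem sq_l2_opNorm_kronecker_mem_spectrum (A₁ A₂ : Matrix (Fin 2) (Fin 2) ℂ) (h : A₁ 0 0 ≠ 0) :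
    ((‖A₁ ⊗ₖ !![(1 : ℂ), 0; 0, 0] + A₂ ⊗ₖ !![(0 : ℂ), 1; 0, 0]‖ ^ 2 : ℝ) : ℂ) ∈
      spectrum ℂ (A₁ * A₁ᴴ + A₂ * A₂ᴴ) := by
  set M := A₁ ⊗ₖ !![(1 : ℂ), 0; 0, 0] + A₂ ⊗ₖ !![(0 : ℂ), 1; 0, 0]
  have hMM : M * Mᴴ = (A₁ * A₁ᴴ + A₂ * A₂ᴴ) ⊗ₖ single 0 0 1 := by
    apply kronecker_add_kronecker_mul_conjTranspose <;>
      ext i j <;> fin_cases i <;> fin_cases j <;> simp [mul_apply, Fin.sum_univ_two]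
  have hM : M ≠ 0 := fun hM => h (by simpa [M] using congrFun (congrFun hM (0, 0)) (0, 0))
  refine mem_spectrum_of_mem_spectrum_kronecker_single ?_
    (hMM ▸ sq_l2_opNorm_mem_spectrum_mul_conjTranspose M)
  exact_mod_cast pow_ne_zero 2 (norm_ne_zero_iff.mpr hM)

theorem gram_eq (d c : ℂ) (b : ℝ) :
    !![(1 : ℂ), 0; 0, d] * !![(1 : ℂ), 0; 0, d]ᴴ +
      !![(1 : ℂ), (b : ℂ); c, 0] * !![(1 : ℂ), (b : ℂ); c, 0]ᴴ =
      !![((2 + b ^ 2 : ℝ) : ℂ), (starRingEnd ℂ) c; c, ((‖c‖ ^ 2 + ‖d‖ ^ 2 : ℝ) : ℂ)] := by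
  ext i j
  fin_cases i <;> fin_cases j <;>
    simp only [Matrix.add_apply, mul_apply, Fin.sum_univ_two, conjTranspose_apply] <;>
    simp [Complex.conj_ofReal, Complex.mul_conj, Complex.normSq_eq_norm_sq] <;> ring

theorem gram_transpose_eq (d c : ℂ) (b : ℝ) :
    !![(1 : ℂ), 0; 0, d]ᵀ * !![(1 : ℂ), 0; 0, d]ᵀᴴ +
      !![(1 : ℂ), (b : ℂ); c, 0]ᵀ * !![(1 : ℂ), (b : ℂ); c, 0]ᵀᴴ =
      !![((2 + ‖c‖ ^ 2 : ℝ) : ℂ), b; b, ((b ^ 2 + ‖d‖ ^ 2 : ℝ) : ℂ)] := by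
  ext i j
  fin_cases i <;> fin_cases j <;>
    simp only [Matrix.add_apply, mul_apply, Fin.sum_univ_two, conjTranspose_apply,
      transpose_apply] <;>
    simp [Complex.conj_ofReal, Complex.mul_conj, Complex.normSq_eq_norm_sq] <;> ring

/-- If `|d| ≠ 1` and `b ≠ |c|`, then `A = (A₁, A₂)` and its transpose `Aᵗ` give different
norms to the element `(Z₁, Z₂)`, i.e. `‖A₁⊗Z₁ + A₂⊗Z₂‖_op ≠ ‖A₁ᵗ⊗Z₁ + A₂ᵗ⊗Z₂‖_op`. -/
theorem transpose_operator_space_distinct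
    (d c : ℂ) (b : ℝ) (hb : 0 ≤ b) (hd : ‖d‖ ≠ 1) (hbc : b ≠ ‖c‖) :
    ‖(!![(1 : ℂ), 0; 0, d]) ⊗ₖ (!![(1 : ℂ), 0; 0, 0]) +
        (!![(1 : ℂ), (b : ℂ); c, 0]) ⊗ₖ (!![(0 : ℂ), 1; 0, 0])‖ ≠
      ‖(!![(1 : ℂ), 0; 0, d])ᵀ ⊗ₖ (!![(1 : ℂ), 0; 0, 0]) +
        (!![(1 : ℂ), (b : ℂ); c, 0])ᵀ ⊗ₖ (!![(0 : ℂ), 1; 0, 0])‖ := by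
  intro heq
  have hM := sq_l2_opNorm_kronecker_mem_spectrum !![(1 : ℂ), 0; 0, d] !![(1 : ℂ), (b : ℂ); c, 0] (by simp)
  have hN := sq_l2_opNorm_kronecker_mem_spectrum !![(1 : ℂ), 0; 0, d]ᵀ !![(1 : ℂ), (b : ℂ); c, 0]ᵀ
    (by simp)
  rw [heq, gram_eq] at hM
  rw [gram_transpose_eq] at hN
  have hdet := det_eq_of_mem_spectrum_of_trace_eq hM hN (by simp [trace_fin_two]; ring)
  simp only [det_fin_two_of, Complex.conj_mul'] at hdet
  have key : (‖c‖ ^ 2 - b ^ 2) * (1 - ‖d‖ ^ 2) = 0 := by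
    have : (((‖c‖ ^ 2 - b ^ 2) * (1 - ‖d‖ ^ 2) : ℝ) : ℂ) = 0 := by
      push_cast at hdet ⊢
      linear_combination hdet
    exact_mod_cast this
  rcases mul_eq_zero.mp key with h | h
  · exact hbc ((pow_left_inj₀ hb (norm_nonneg c) two_ne_zero).mp (sub_eq_zero.mp h).symm)
  · exact hd ((pow_left_inj₀ (norm_nonneg d) zero_le_one two_ne_zero).mp (by linarith))
end

section
/- Let A₁ = [[1,0],[0,1]] and A₂ = [[0,1],[0,0]], with the norm ‖(z₁,z₂)‖_A = ‖z₁A₁+z₂A₂‖_op on ℂ², and let ‖(ω₁,ω₂)‖_A* = sup{|ω₁z₁+ω₂z₂| : ‖(z₁,z₂)‖_A ≤ 1} be the dual norm. Then for all (ω₁,ω₂) ∈ ℂ² with ω₂ ≠ 0: if |ω₂| ≥ |ω₁|/2 then ‖(ω₁,ω₂)‖_A* = (|ω₁|² + 4|ω₂|²)/(4|ω₂|), and if |ω₂| ≤ |ω₁|/2 then ‖(ω₁,ω₂)‖_A* = |ω₁|. -/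
/-!
The matrix `z₁ A₁ + z₂ A₂` is the Jordan-type block `!![z₁, z₂; 0, z₁]`, and its operator norm is
at most one exactly when `‖z₁‖² + ‖z₂‖ ≤ 1`: after rotating phases this is the positivity of the
real quadratic form `c² + s² - (x c + y s)² - (x s)²` with `x = ‖z₁‖`, `y = ‖z₂‖`. Aligning the
phases of `z₁, z₂` with those of `ω₁, ω₂`, the dual norm becomes the maximum of
`u ↦ ‖ω₁‖ u + ‖ω₂‖ (1 - u²)` on `[0, 1]`, attained at the vertex `‖ω₁‖ / (2 ‖ω₂‖)` when this lies
in `[0, 1]` and at `u = 1` otherwise.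
-/

open Matrix
open scoped Matrix.Norms.L2Operator

theorem sq_add_le_one_iff_forall (x y : ℝ) (hy : 0 ≤ y) :
    x ^ 2 + y ≤ 1 ↔ ∀ c s : ℝ, (x * c + y * s) ^ 2 + (x * s) ^ 2 ≤ c ^ 2 + s ^ 2 := by
  -- with `t = 1 - x ^ 2`, `t * (c² + s² - (x c + y s)² - (x s)²) = (t c - x y s)² + (t² - y²) s²`
  constructor
  · intro hxy c s
    rcases (show 0 ≤ 1 - x ^ 2 by linarith).eq_or_lt with ht | ht
    · obtain rfl : y = 0 := by linarith
      nlinarith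
    · have key : 0 ≤ (1 - x ^ 2) * (c ^ 2 + s ^ 2 - (x * c + y * s) ^ 2 - (x * s) ^ 2) := by
        nlinarith [sq_nonneg ((1 - x ^ 2) * c - x * y * s),
          mul_nonneg (mul_nonneg (by linarith : 0 ≤ 1 - x ^ 2 - y)
            (by linarith : 0 ≤ 1 - x ^ 2 + y)) (sq_nonneg s)]
      nlinarith [nonneg_of_mul_nonneg_right key ht]
  · intro h
    have hx : x ^ 2 ≤ 1 := by nlinarith [h 1 0]
    rcases hx.eq_or_lt with hx | hx
    · nlinarith [h x 1]
    · have key := h (x * y) (1 - x ^ 2)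
      have : y ^ 2 ≤ (1 - x ^ 2) ^ 2 := by nlinarith
      linarith [(sq_le_sq₀ hy (by linarith)).1 this]

theorem isMaxOn_mul_add_mul_one_sub_sq_div {a b : ℝ} (hb : 0 < b) (s : Set ℝ) :
    IsMaxOn (fun u : ℝ => a * u + b * (1 - u ^ 2)) s (a / (2 * b)) := by
  refine isMaxOn_iff.2 fun u _ => ?_
  have ha : a = 2 * b * (a / (2 * b)) := by field_simp
  generalize a / (2 * b) = u₀ at ha ⊢
  subst ha
  nlinarith [mul_nonneg hb.le (sq_nonneg (u - u₀))]

theorem isMaxOn_mul_add_mul_one_sub_sq_one {a b : ℝ} (hb : 0 ≤ b) (hab : 2 * b ≤ a) :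
    IsMaxOn (fun u : ℝ => a * u + b * (1 - u ^ 2)) (Set.Icc 0 1) 1 := by
  refine isMaxOn_iff.2 fun u ⟨hu₀, hu₁⟩ => ?_
  have : b * (1 + u) ≤ a := by nlinarith
  nlinarith [mul_nonneg (sub_nonneg.2 hu₁) (sub_nonneg.2 this)]

namespace Matrix

variable {𝕜 m n : Type*} [RCLike 𝕜] [Fintype m] [Fintype n] [DecidableEq n]

theorem l2_opNorm_le_iff {A : Matrix m n 𝕜} {c : ℝ} (hc : 0 ≤ c) :
    ‖A‖ ≤ c ↔ ∀ v : n → 𝕜, ‖WithLp.toLp 2 (A *ᵥ v)‖ ≤ c * ‖WithLp.toLp 2 v‖ := by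
  rw [l2_opNorm_def, ContinuousLinearMap.opNorm_le_iff hc]
  exact ⟨fun h v => h (WithLp.toLp 2 v), fun h x => h x.ofLp⟩

end Matrix

section RCLike

variable {𝕜 : Type*} [RCLike 𝕜]

theorem exists_norm_eq_one_mul_eq_norm (z : 𝕜) : ∃ u : 𝕜, ‖u‖ = 1 ∧ z * u = ‖z‖ := by
  rcases eq_or_ne z 0 with rfl | hz
  · exact ⟨1, by simp⟩
  · refine ⟨starRingEnd 𝕜 z / ‖z‖, by simp [norm_ne_zero_iff.2 hz], ?_⟩
    rw [mul_div_assoc', RCLike.mul_conj]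
    field_simp

theorem jordanBlock_l2_opNorm_le_one_iff_forall (z₁ z₂ : 𝕜) :
    ‖!![z₁, z₂; 0, z₁]‖ ≤ 1 ↔
      ∀ a b : 𝕜, ‖z₁ * a + z₂ * b‖ ^ 2 + ‖z₁ * b‖ ^ 2 ≤ ‖a‖ ^ 2 + ‖b‖ ^ 2 := by
  simp only [l2_opNorm_le_iff zero_le_one, one_mul, ← sq_le_sq₀ (norm_nonneg _) (norm_nonneg _),
    EuclideanSpace.norm_sq_eq, Fin.sum_univ_two]
  simp only [mulVec, dotProduct, of_apply, cons_val', cons_val_fin_one, cons_val_zero,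
    Fin.sum_univ_two, cons_val_one, zero_mul, zero_add, norm_mul]
  exact ⟨fun h a b => h ![a, b], fun h v => h (v 0) (v 1)⟩

theorem jordanBlock_l2_opNorm_le_one_iff (z₁ z₂ : 𝕜) :
    ‖!![z₁, z₂; 0, z₁]‖ ≤ 1 ↔ ‖z₁‖ ^ 2 + ‖z₂‖ ≤ 1 := by
  rw [jordanBlock_l2_opNorm_le_one_iff_forall, sq_add_le_one_iff_forall _ _ (norm_nonneg z₂)]
  constructor
  · intro h c s
    obtain ⟨u₁, hu₁, hzu₁⟩ := exists_norm_eq_one_mul_eq_norm z₁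
    obtain ⟨u₂, hu₂, hzu₂⟩ := exists_norm_eq_one_mul_eq_norm z₂
    have hsum : z₁ * (c * u₁) + z₂ * (s * u₂) = ((‖z₁‖ * c + ‖z₂‖ * s : ℝ) : 𝕜) := by
      rw [mul_left_comm, hzu₁, mul_left_comm, hzu₂]
      push_cast
      ring
    simpa only [hsum, norm_mul, RCLike.norm_ofReal, hu₁, hu₂, mul_one, sq_abs, mul_pow] using
      h (c * u₁) (s * u₂)
  · intro h a b
    calc ‖z₁ * a + z₂ * b‖ ^ 2 + ‖z₁ * b‖ ^ 2
        ≤ (‖z₁‖ * ‖a‖ + ‖z₂‖ * ‖b‖) ^ 2 + (‖z₁‖ * ‖b‖) ^ 2 := by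
          grw [norm_add_le, norm_mul, norm_mul, norm_mul]
      _ ≤ ‖a‖ ^ 2 + ‖b‖ ^ 2 := h _ _

theorem isGreatest_norm_linear_of_isMaxOn {ω₁ ω₂ : 𝕜} {u₀ : ℝ} (hu₀ : u₀ ∈ Set.Icc (0 : ℝ) 1)
    (hmax : IsMaxOn (fun u : ℝ => ‖ω₁‖ * u + ‖ω₂‖ * (1 - u ^ 2)) (Set.Icc 0 1) u₀) :
    IsGreatest {r : ℝ | ∃ z₁ z₂ : 𝕜, ‖z₁‖ ^ 2 + ‖z₂‖ ≤ 1 ∧ r = ‖ω₁ * z₁ + ω₂ * z₂‖}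
      (‖ω₁‖ * u₀ + ‖ω₂‖ * (1 - u₀ ^ 2)) := by
  obtain ⟨hu₀0, hu₀1⟩ := hu₀
  have hv₀ : 0 ≤ 1 - u₀ ^ 2 := by nlinarith
  constructor
  · obtain ⟨u₁, hu₁, hωu₁⟩ := exists_norm_eq_one_mul_eq_norm ω₁
    obtain ⟨u₂, hu₂, hωu₂⟩ := exists_norm_eq_one_mul_eq_norm ω₂
    refine ⟨u₀ * u₁, (1 - u₀ ^ 2 : ℝ) * u₂, ?_, ?_⟩
    · simp only [norm_mul, RCLike.norm_ofReal, hu₁, hu₂, mul_one, abs_of_nonneg hu₀0,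
        abs_of_nonneg hv₀]
      linarith
    · have hsum : ω₁ * (u₀ * u₁) + ω₂ * ((1 - u₀ ^ 2 : ℝ) * u₂)
          = ((‖ω₁‖ * u₀ + ‖ω₂‖ * (1 - u₀ ^ 2) : ℝ) : 𝕜) := by
        rw [mul_left_comm, hωu₁, mul_left_comm, hωu₂]
        push_cast
        ring
      rw [hsum, RCLike.norm_ofReal, abs_of_nonneg (by positivity)]
  · rintro r ⟨z₁, z₂, hz, rfl⟩
    have hz₁ : ‖z₁‖ ≤ 1 := by nlinarith [norm_nonneg z₁, norm_nonneg z₂]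
    calc ‖ω₁ * z₁ + ω₂ * z₂‖ ≤ ‖ω₁‖ * ‖z₁‖ + ‖ω₂‖ * ‖z₂‖ := by
          grw [norm_add_le, norm_mul, norm_mul]
      _ ≤ ‖ω₁‖ * ‖z₁‖ + ‖ω₂‖ * (1 - ‖z₁‖ ^ 2) := by gcongr; linarith
      _ ≤ ‖ω₁‖ * u₀ + ‖ω₂‖ * (1 - u₀ ^ 2) := hmax ⟨norm_nonneg z₁, hz₁⟩

end RCLike

/-- Explicit formula for the dual norm `‖·‖_A*` when `A₁ = I₂` and `A₂ = E₁₂`. -/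
theorem dual_norm_formula
    (ω₁ ω₂ : ℂ) (h : ω₂ ≠ 0) :
    (‖ω₂‖ ≥ ‖ω₁‖ / 2 →
      sSup {r : ℝ | ∃ z₁ z₂ : ℂ,
          ‖z₁ • (!![(1 : ℂ), 0; 0, 1]) + z₂ • (!![(0 : ℂ), 1; 0, 0])‖ ≤ 1 ∧
          r = ‖ω₁ * z₁ + ω₂ * z₂‖} =
        (‖ω₁‖ ^ 2 + 4 * ‖ω₂‖ ^ 2) / (4 * ‖ω₂‖)) ∧
    (‖ω₂‖ ≤ ‖ω₁‖ / 2 →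
      sSup {r : ℝ | ∃ z₁ z₂ : ℂ,
          ‖z₁ • (!![(1 : ℂ), 0; 0, 1]) + z₂ • (!![(0 : ℂ), 1; 0, 0])‖ ≤ 1 ∧
          r = ‖ω₁ * z₁ + ω₂ * z₂‖} =
        ‖ω₁‖) := by
  have hball (z₁ z₂ : ℂ) :
      ‖z₁ • !![(1 : ℂ), 0; 0, 1] + z₂ • !![(0 : ℂ), 1; 0, 0]‖ ≤ 1 ↔ ‖z₁‖ ^ 2 + ‖z₂‖ ≤ 1 := by
    rw [← jordanBlock_l2_opNorm_le_one_iff]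
    convert Iff.rfl using 3
    ext i j
    fin_cases i <;> fin_cases j <;> simp
  simp only [hball]
  have hb : 0 < ‖ω₂‖ := norm_pos_iff.2 h
  refine ⟨fun hge => ?_, fun hle => ?_⟩
  · have hu₀ : ‖ω₁‖ / (2 * ‖ω₂‖) ∈ Set.Icc (0 : ℝ) 1 :=
      ⟨by positivity, (div_le_one (by positivity)).2 (by linarith)⟩
    convert (isGreatest_norm_linear_of_isMaxOn hu₀
      (isMaxOn_mul_add_mul_one_sub_sq_div hb _)).csSup_eq using 1
    field_simp
    ring
  · convert (isGreatest_norm_linear_of_isMaxOn ⟨zero_le_one, le_rfl⟩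
      (isMaxOn_mul_add_mul_one_sub_sq_one hb.le (by linarith))).csSup_eq using 1
    ring
end
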